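/- arXiv:2006.09219 — 3 statements merged into one kernel-verified Lean document; each statement's English description precedes it below -/
import Mathlib

section
/- For each fixed real y, the vector of IDR fitted probabilities (F̂_{ϑ_1}(y),...,F̂_{ϑ_m}(y)) given by the isotonic min-max formula applied to z_i = 1{y_i ≤ y} defines, as y varies, genuine CDF values: each component y ↦ F̂_{ϑ_j}(y) is a nondecreasing, right-continuous step function taking values in [0,1] that equals 0 for y below min_i y_i and 1 for y ≥ max_i y_i. -/
/-!
The min-max functional `z ↦ min_{r ≤ j} max_{s ≥ j} mean(z_r, …, z_s)` is monotone and continuous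
in the data vector `z` and fixes constant vectors. The indicator vector `t ↦ (1{y_i ≤ t})_i` is
nondecreasing, right-continuous and finitely valued, with values in `[0, 1]^m`, equal to `0` below
`min y` and to `1` from `max y` on. Each property of `F̂_{ϑ_j}` is the composite of the two.
-/

/-- The IDR fitted probability at design point j and threshold t, given by the isotonic
min-max formula applied to the indicators 1{y_i ≤ t}. -/
noncomputable def idrFit {m : ℕ} (y : Fin m → ℝ) (j : Fin m) (t : ℝ) : ℝ :=
  (Finset.Iic j).inf' ⟨j, Finset.mem_Iic.mpr le_rfl⟩ (fun r =>
    (Finset.Ici j).sup' ⟨j, Finset.mem_Ici.mpr le_rfl⟩ (fun s =>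
      (∑ i ∈ Finset.Icc r s, if y i ≤ t then (1:ℝ) else 0) /
        (((s : ℕ) - (r : ℕ) + 1 : ℕ) : ℝ)))

open Finset

section MinMax

variable {ι α : Type*} [Preorder ι] [LocallyFiniteOrderBot ι] [LocallyFiniteOrderTop ι] [Lattice α]

def minMax (f : ι → ι → α) (j : ι) : α :=
  (Iic j).inf' nonempty_Iic fun r => (Ici j).sup' nonempty_Ici (f r)

theorem minMax_mono {f g : ι → ι → α} (h : f ≤ g) (j : ι) : minMax f j ≤ minMax g j :=
  inf'_mono_fun fun r _ => sup'_mono_fun fun s _ => h r s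

theorem minMax_eq_of_forall {f : ι → ι → α} {j : ι} {c : α}
    (h : ∀ r ≤ j, ∀ s, j ≤ s → f r s = c) : minMax f j = c := by
  unfold minMax
  rw [inf'_congr _ rfl fun r hr => sup'_congr _ rfl fun s hs =>
      h r (mem_Iic.mp hr) s (mem_Ici.mp hs), sup'_const, inf'_const]

theorem Continuous.minMax [TopologicalSpace α] [TopologicalLattice α] {X : Type*}
    [TopologicalSpace X] {F : X → ι → ι → α} (hF : ∀ r s, Continuous fun x => F x r s) (j : ι) :
    Continuous fun x => _root_.minMax (F x) j :=
  Continuous.finset_inf'_apply _ fun r _ => Continuous.finset_sup'_apply _ fun s _ => hF r s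

end MinMax

section IsotonicFit

variable {m : ℕ}

noncomputable def blockMean (z : Fin m → ℝ) (r s : Fin m) : ℝ :=
  (∑ i ∈ Icc r s, z i) / (((s : ℕ) - (r : ℕ) + 1 : ℕ) : ℝ)

theorem blockMean_mono : Monotone (blockMean (m := m)) := fun _ _ h _ _ =>
  div_le_div_of_nonneg_right (sum_le_sum fun i _ => h i) (Nat.cast_nonneg _)

theorem blockMean_const (c : ℝ) {r s : Fin m} (h : r ≤ s) : blockMean (fun _ => c) r s = c := by
  have hcard : ((Icc r s).card : ℝ) = (((s : ℕ) - (r : ℕ) + 1 : ℕ) : ℝ) := by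
    rw [Fin.card_Icc]; congr 1; have := Fin.le_iff_val_le_val.mp h; omega
  rw [blockMean, sum_const, nsmul_eq_mul, hcard, mul_div_cancel_left₀ _ (by positivity)]

theorem continuous_blockMean (r s : Fin m) : Continuous fun z : Fin m → ℝ => blockMean z r s := by
  unfold blockMean; fun_prop

noncomputable def isotonicFit (z : Fin m → ℝ) (j : Fin m) : ℝ := minMax (blockMean z) j

theorem isotonicFit_mono : Monotone (isotonicFit (m := m)) := fun _ _ h =>
  minMax_mono (blockMean_mono h)

theorem isotonicFit_const (c : ℝ) (j : Fin m) : isotonicFit (fun _ => c) j = c :=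
  minMax_eq_of_forall fun _ hr _ hs => blockMean_const c (hr.trans hs)

theorem continuous_isotonicFit (j : Fin m) : Continuous fun z : Fin m → ℝ => isotonicFit z j :=
  Continuous.minMax continuous_blockMean j

end IsotonicFit

section BelowIndicator

variable {ι : Type*} (y : ι → ℝ)

noncomputable def belowIndicator (t : ℝ) (i : ι) : ℝ := if y i ≤ t then 1 else 0

theorem belowIndicator_mono : Monotone (belowIndicator y) := fun a b hab i => by
  unfold belowIndicator
  split_ifs with ha hb
  exacts [le_rfl, absurd (ha.trans hab) hb, zero_le_one, le_rfl]

theorem belowIndicator_mem_Icc (t : ℝ) : belowIndicator y t ∈ Set.Icc 0 1 :=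
  ⟨fun i => by unfold belowIndicator; split_ifs <;> norm_num,
   fun i => by unfold belowIndicator; split_ifs <;> norm_num⟩

theorem belowIndicator_of_lt {t : ℝ} (h : ∀ i, t < y i) : belowIndicator y t = fun _ => 0 :=
  funext fun i => if_neg (h i).not_ge

theorem belowIndicator_of_le {t : ℝ} (h : ∀ i, y i ≤ t) : belowIndicator y t = fun _ => 1 :=
  funext fun i => if_pos (h i)

theorem continuousWithinAt_belowIndicator (t : ℝ) :
    ContinuousWithinAt (belowIndicator y) (Set.Ici t) t := by
  refine continuousWithinAt_pi.mpr fun i => ?_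
  unfold belowIndicator
  rcases le_or_gt (y i) t with hle | hlt
  · exact continuousWithinAt_const.congr (fun x hx => if_pos (hle.trans hx)) (if_pos hle)
  · refine (continuousAt_const (y := (0 : ℝ))).congr_of_eventuallyEq ?_ |>.continuousWithinAt
    filter_upwards [Iio_mem_nhds hlt] with x hx using if_neg (not_le.mpr hx)

theorem finite_range_belowIndicator [Finite ι] : (Set.range (belowIndicator y)).Finite := by
  refine (Set.Finite.pi fun _ => Set.toFinite {(0 : ℝ), 1}).subset ?_
  rintro _ ⟨t, rfl⟩ i -
  unfold belowIndicator
  split_ifs <;> simp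

end BelowIndicator

theorem idrFit_eq_isotonicFit {m : ℕ} (y : Fin m → ℝ) (j : Fin m) :
    idrFit y j = fun t => isotonicFit (belowIndicator y t) j := rfl

theorem stmt_8_general {m : ℕ} (hm : 0 < m)
    (y : Fin m → ℝ) :
    ∀ j : Fin m,
      Monotone (idrFit y j) ∧
      (∀ t : ℝ, idrFit y j t ∈ Set.Icc (0:ℝ) 1) ∧
      (∀ t : ℝ, ContinuousWithinAt (idrFit y j) (Set.Ici t) t) ∧
      (Set.range (idrFit y j)).Finite ∧
      (∀ t : ℝ, t < Finset.univ.inf' ⟨⟨0, hm⟩, Finset.mem_univ _⟩ y → idrFit y j t = 0) ∧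
      (∀ t : ℝ, Finset.univ.sup' ⟨⟨0, hm⟩, Finset.mem_univ _⟩ y ≤ t → idrFit y j t = 1) := by
  intro j
  simp only [idrFit_eq_isotonicFit]
  refine ⟨fun a b hab => isotonicFit_mono (belowIndicator_mono y hab) j, fun t => ?_,
    fun t => (continuous_isotonicFit j).continuousAt.comp_continuousWithinAt
      (continuousWithinAt_belowIndicator y t),
    (finite_range_belowIndicator y).image _ |>.subset
      (Set.range_comp (fun z => isotonicFit z j) (belowIndicator y)).subset,
    fun t ht => ?_, fun t ht => ?_⟩
  · obtain ⟨h0, h1⟩ := belowIndicator_mem_Icc y t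
    exact ⟨(isotonicFit_const 0 j).symm.trans_le (isotonicFit_mono h0 j),
      (isotonicFit_mono h1 j).trans_eq (isotonicFit_const 1 j)⟩
  · rw [belowIndicator_of_lt y fun i => ht.trans_le (inf'_le y (mem_univ i)), isotonicFit_const]
  · rw [belowIndicator_of_le y fun i => (le_sup' y (mem_univ i)).trans ht, isotonicFit_const]

/-- For each design point, the IDR fitted probabilities define a genuine CDF as the
threshold varies: nondecreasing, right-continuous, a step function (finite range) with
values in [0,1], equal to 0 below min_i y_i and to 1 from max_i y_i on. -/
theorem stmt_8 {m : ℕ} (hm : 0 < m) (ϑ : Fin m → ℝ) (hϑ : StrictMono ϑ)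
    (y : Fin m → ℝ) :
    ∀ j : Fin m,
      Monotone (idrFit y j) ∧
      (∀ t : ℝ, idrFit y j t ∈ Set.Icc (0:ℝ) 1) ∧
      (∀ t : ℝ, ContinuousWithinAt (idrFit y j) (Set.Ici t) t) ∧
      (Set.range (idrFit y j)).Finite ∧
      (∀ t : ℝ, t < Finset.univ.inf' ⟨⟨0, hm⟩, Finset.mem_univ _⟩ y → idrFit y j t = 0) ∧
      (∀ t : ℝ, Finset.univ.sup' ⟨⟨0, hm⟩, Finset.mem_univ _⟩ y ≤ t → idrFit y j t = 1) :=
  stmt_8_general hm y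
end

section
/- For a CDF F of a distribution with finite first moment and y ∈ ℝ, the CRPS is finite: ∫_ℝ (F(z) - 1{y ≤ z})² dz < ∞. -/
/-!
With `I x := Ico (min x y) (max x y)`, the deviation `|F z - 1{y ≤ z}|` equals
`μ {x | z ∈ I x}`: it is `μ (Ioi z)` for `y ≤ z` and `μ (Iic z)` for `z < y`. As this lies in
`[0, 1]`, it bounds its own square, and by Tonelli its integral over `z` is `∫ |x - y| dμ(x) < ∞`.
-/

open MeasureTheory Set

theorem setOf_mem_Ico_min_max (y z : ℝ) :
    {x : ℝ | z ∈ Ico (min x y) (max x y)} = if y ≤ z then Ioi z else Iic z := by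
  ext x
  split_ifs <;>
    simp only [mem_ofPred_eq, mem_Ico, min_le_iff, lt_max_iff, mem_Ioi, mem_Iic] <;> grind

theorem ofReal_sq_cdf_sub_indicator_le (μ : Measure ℝ) [IsProbabilityMeasure μ] (y z : ℝ) :
    ENNReal.ofReal ((μ.real (Iic z) - if y ≤ z then 1 else 0) ^ 2) ≤
      μ {x | z ∈ Ico (min x y) (max x y)} := by
  have h0 : 0 ≤ μ.real (Iic z) := measureReal_nonneg
  have h1 : μ.real (Iic z) ≤ 1 := measureReal_le_one
  rw [setOf_mem_Ico_min_max]
  split_ifs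
  · rw [← ofReal_measureReal, ← compl_Iic, probReal_compl_eq_one_sub measurableSet_Iic]
    exact ENNReal.ofReal_le_ofReal (by nlinarith)
  · rw [← ofReal_measureReal]
    exact ENNReal.ofReal_le_ofReal (by nlinarith)

theorem lintegral_measure_setOf_mem_Ico_min_max (μ : Measure ℝ) [SFinite μ] (y : ℝ) :
    ∫⁻ z, μ {x | z ∈ Ico (min x y) (max x y)} = ∫⁻ x, ENNReal.ofReal |x - y| ∂μ := by
  have hs : MeasurableSet {p : ℝ × ℝ | p.1 ∈ Ico (min p.2 y) (max p.2 y)} :=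
    (measurableSet_le (by fun_prop) measurable_fst).inter
      (measurableSet_lt measurable_fst (by fun_prop))
  calc ∫⁻ z, μ {x | z ∈ Ico (min x y) (max x y)}
      = volume.prod μ {p : ℝ × ℝ | p.1 ∈ Ico (min p.2 y) (max p.2 y)} :=
        (Measure.prod_apply hs).symm
    _ = ∫⁻ x, volume (Ico (min x y) (max x y)) ∂μ := Measure.prod_apply_symm hs
    _ = ∫⁻ x, ENNReal.ofReal |x - y| ∂μ := by
        simp_rw [Real.volume_Ico, max_sub_min_eq_abs, abs_sub_comm]

/-- For the CDF F of a distribution with finite first moment and any y ∈ ℝ, the CRPS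
∫ (F(z) - 1{y ≤ z})² dz is finite. -/
theorem stmt_11 (μ : Measure ℝ) [IsProbabilityMeasure μ]
    (hμ : Integrable id μ)
    (F : ℝ → ℝ) (hF : ∀ z : ℝ, F z = (μ (Set.Iic z)).toReal) (y : ℝ) :
    (∫⁻ z : ℝ, ENNReal.ofReal ((F z - if y ≤ z then (1:ℝ) else 0)^2)) < ⊤ := by
  calc (∫⁻ z : ℝ, ENNReal.ofReal ((F z - if y ≤ z then (1:ℝ) else 0)^2))
      ≤ ∫⁻ z, μ {x | z ∈ Ico (min x y) (max x y)} := lintegral_mono fun z => by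
        rw [hF]; exact ofReal_sq_cdf_sub_indicator_le μ y z
    _ = ∫⁻ x, ENNReal.ofReal |x - y| ∂μ := lintegral_measure_setOf_mem_Ico_min_max μ y
    _ < ⊤ := (hμ.sub (integrable_const y)).abs.lintegral_lt_top
end

section
/- Propriety of the CRPS: if Y is a real random variable with CDF G having finite first moment, then for every CDF F with finite first moment, E[CRPS(F, Y)] ≥ E[CRPS(G, Y)]; indeed E[CRPS(F, Y)] - E[CRPS(G, Y)] = ∫_ℝ (F(z) - G(z))² dz. -/
/-!
For a fixed point `z`, the indicator `1{Y ≤ z}` is a Bernoulli variable with mean `G z`, so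
`E[(F z - 1{Y ≤ z})²] = (F z - G z)² + G z (1 - G z)` (bias–variance). Integrating in `z` and
exchanging the order of integration gives
`E[CRPS(F, Y)] = ∫ (F - G)² + ∫ G (1 - G)`, and the second term does not depend on `F`.

Fubini applies because a finite first moment makes `F z - 1{0 ≤ z}` integrable in `z`:
`∫ |1{x ≤ z} - 1{0 ≤ z}| dz = |x|`, and averaging over `x ~ μ` gives `F z - 1{0 ≤ z}`.
Both `(F - G)²` and `G (1 - G)` are dominated by such functions.
-/

open MeasureTheory ProbabilityTheory Set

noncomputable def crps (F : ℝ → ℝ) (y : ℝ) : ℝ := ∫ z, (F z - if y ≤ z then 1 else 0) ^ 2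

lemma measurable_step (x : ℝ) : Measurable fun z : ℝ => if x ≤ z then (1 : ℝ) else 0 :=
  Measurable.ite measurableSet_Ici measurable_const measurable_const

lemma abs_step_sub_step (x y z : ℝ) :
    |(if x ≤ z then (1 : ℝ) else 0) - if y ≤ z then 1 else 0|
      = (Ico (min x y) (max x y)).indicator 1 z := by
  rcases le_total x y with h | h <;>
  by_cases hx : x ≤ z <;> by_cases hy : y ≤ z <;>
  simp [indicator_apply, h, hx, hy] <;> linarith

lemma integrable_step_sub_step (x y : ℝ) :
    Integrable fun z : ℝ => (if x ≤ z then (1 : ℝ) else 0) - if y ≤ z then 1 else 0 := by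
  refine (integrable_norm_iff
    ((measurable_step x).sub (measurable_step y)).aestronglyMeasurable).1 ?_
  simp only [Real.norm_eq_abs, Pi.sub_apply]
  rw [funext (abs_step_sub_step x y)]
  exact (integrable_indicator_iff measurableSet_Ico).2 (integrableOn_const measure_Ico_lt_top.ne)

lemma integral_abs_step_sub_step (x y : ℝ) :
    ∫ z, |(if x ≤ z then (1 : ℝ) else 0) - if y ≤ z then 1 else 0| = |x - y| := by
  simp only [abs_step_sub_step, integral_indicator_one measurableSet_Ico,
    Real.volume_real_Ico_of_le min_le_max, max_sub_min_eq_abs']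

lemma sub_indicator_one_sq {α : Type*} (s : Set α) (a : ℝ) (y : α) :
    (a - s.indicator 1 y) ^ 2 = a ^ 2 - (2 * a - 1) * s.indicator 1 y := by
  by_cases hy : y ∈ s <;> simp [hy]
  ring

section Indicator

variable {α : Type*} [MeasurableSpace α] (ν : Measure α) [IsProbabilityMeasure ν]

lemma integrable_sub_indicator_one_sq {s : Set α} (hs : MeasurableSet s) (a : ℝ) :
    Integrable (fun y => (a - s.indicator 1 y) ^ 2) ν := by
  simp only [sub_indicator_one_sq]
  exact (integrable_const _).sub (((integrable_const 1).indicator hs).const_mul _)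

lemma integral_sub_indicator_one_sq {s : Set α} (hs : MeasurableSet s) (a : ℝ) :
    ∫ y, (a - s.indicator 1 y) ^ 2 ∂ν = (a - ν.real s) ^ 2 + ν.real s * (1 - ν.real s) := by
  simp only [sub_indicator_one_sq]
  rw [integral_sub (integrable_const _) (((integrable_const 1).indicator hs).const_mul _),
    integral_const_mul, integral_indicator_one hs, integral_const, probReal_univ, one_smul]
  ring

end Indicator

section CDF

variable {μ ν : Measure ℝ} [IsProbabilityMeasure μ] [IsProbabilityMeasure ν]

lemma integral_step_eq_cdf (z : ℝ) :
    ∫ x, (if x ≤ z then (1 : ℝ) else 0) ∂μ = cdf μ z := by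
  rw [cdf_eq_real, ← integral_indicator_one measurableSet_Iic]
  rfl

lemma integrable_cdf_sub_step (hμ : Integrable id μ) :
    Integrable fun z => cdf μ z - if 0 ≤ z then 1 else 0 := by
  set g : ℝ × ℝ → ℝ := fun p => (if p.1 ≤ p.2 then 1 else 0) - if 0 ≤ p.2 then 1 else 0
  have hg_meas : Measurable g :=
    (Measurable.ite (measurableSet_le measurable_fst measurable_snd) measurable_const
      measurable_const).sub ((measurable_step 0).comp measurable_snd)
  have hg : Integrable g (μ.prod volume) := by
    refine (integrable_prod_iff hg_meas.aestronglyMeasurable).2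
      ⟨ae_of_all _ fun x => integrable_step_sub_step x 0, ?_⟩
    simpa only [g, Real.norm_eq_abs, integral_abs_step_sub_step, sub_zero, id_eq] using hμ.norm
  refine hg.integral_prod_right.congr (ae_of_all _ fun z => ?_)
  have h_step : Integrable (fun x : ℝ => if x ≤ z then (1 : ℝ) else 0) μ :=
    (integrable_const 1).indicator measurableSet_Iic
  change ∫ x, ((if x ≤ z then (1 : ℝ) else 0) - if 0 ≤ z then 1 else 0) ∂μ = _
  rw [integral_sub h_step (integrable_const _), integral_step_eq_cdf, integral_const,
    probReal_univ, one_smul]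

lemma integrable_cdf_mul_one_sub_cdf (hν : Integrable id ν) :
    Integrable fun z => cdf ν z * (1 - cdf ν z) := by
  refine (integrable_cdf_sub_step hν).abs.mono'
    ((monotone_cdf ν).measurable.mul
      (measurable_const.sub (monotone_cdf ν).measurable)).aestronglyMeasurable
    (ae_of_all _ fun z => ?_)
  have h0 := cdf_nonneg ν z
  have h1 := cdf_le_one ν z
  rw [Real.norm_of_nonneg (by nlinarith)]
  split_ifs
  · rw [abs_of_nonpos (by linarith)]; nlinarith
  · rw [sub_zero, abs_of_nonneg h0]; nlinarith

lemma integrable_sq_cdf_sub_cdf (hμ : Integrable id μ) (hν : Integrable id ν) :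
    Integrable fun z => (cdf μ z - cdf ν z) ^ 2 := by
  refine ((integrable_cdf_sub_step hμ).sub (integrable_cdf_sub_step hν)).abs.mono'
    (((monotone_cdf μ).measurable.sub (monotone_cdf ν).measurable).pow_const 2).aestronglyMeasurable
    (ae_of_all _ fun z => ?_)
  have h_le_one : |cdf μ z - cdf ν z| ≤ 1 := abs_sub_le_iff.2
    ⟨by linarith [cdf_le_one μ z, cdf_nonneg ν z], by linarith [cdf_le_one ν z, cdf_nonneg μ z]⟩
  rw [Real.norm_of_nonneg (sq_nonneg _), Pi.sub_apply, sub_sub_sub_cancel_right, ← sq_abs]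
  nlinarith [abs_nonneg (cdf μ z - cdf ν z)]

theorem integral_crps (hν : Integrable id ν) {F : ℝ → ℝ} (hF : Measurable F)
    (hFG : Integrable fun z => (F z - cdf ν z) ^ 2) :
    ∫ y, crps F y ∂ν = (∫ z, (F z - cdf ν z) ^ 2) + ∫ z, cdf ν z * (1 - cdf ν z) := by
  have h_inner (z : ℝ) : ∫ y, (F z - if y ≤ z then 1 else 0) ^ 2 ∂ν
      = (F z - cdf ν z) ^ 2 + cdf ν z * (1 - cdf ν z) := by
    rw [cdf_eq_real]
    exact integral_sub_indicator_one_sq ν measurableSet_Iic (F z)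
  have h_meas : Measurable fun p : ℝ × ℝ => (F p.2 - if p.1 ≤ p.2 then 1 else 0) ^ 2 :=
    ((hF.comp measurable_snd).sub (Measurable.ite (measurableSet_le measurable_fst measurable_snd)
      measurable_const measurable_const)).pow_const 2
  have h_int : Integrable (fun p : ℝ × ℝ => (F p.2 - if p.1 ≤ p.2 then 1 else 0) ^ 2)
      (ν.prod volume) := by
    refine (integrable_prod_iff' h_meas.aestronglyMeasurable).2
      ⟨ae_of_all _ fun z => integrable_sub_indicator_one_sq ν measurableSet_Iic (F z), ?_⟩
    simp only [Real.norm_of_nonneg (sq_nonneg _), h_inner]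
    exact hFG.add (integrable_cdf_mul_one_sub_cdf hν)
  unfold crps
  rw [integral_integral_swap h_int]
  simp only [h_inner]
  exact integral_add hFG (integrable_cdf_mul_one_sub_cdf hν)

end CDF

/-- Propriety of the CRPS: if Y has CDF G (law ν) with finite first moment, then for every
CDF F (of a law μ) with finite first moment,
E[CRPS(F,Y)] - E[CRPS(G,Y)] = ∫ (F(z) - G(z))² dz, and hence E[CRPS(G,Y)] ≤ E[CRPS(F,Y)]. -/
theorem stmt_12 (μ ν : Measure ℝ) [IsProbabilityMeasure μ] [IsProbabilityMeasure ν]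
    (hμ : Integrable id μ) (hν : Integrable id ν)
    (F G : ℝ → ℝ) (hF : ∀ z : ℝ, F z = (μ (Set.Iic z)).toReal)
    (hG : ∀ z : ℝ, G z = (ν (Set.Iic z)).toReal) :
    ((∫ y, (∫ z : ℝ, (F z - if y ≤ z then (1:ℝ) else 0)^2) ∂ν) -
      ∫ y, (∫ z : ℝ, (G z - if y ≤ z then (1:ℝ) else 0)^2) ∂ν)
      = (∫ z : ℝ, (F z - G z)^2) ∧
    (∫ y, (∫ z : ℝ, (G z - if y ≤ z then (1:ℝ) else 0)^2) ∂ν) ≤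
      ∫ y, (∫ z : ℝ, (F z - if y ≤ z then (1:ℝ) else 0)^2) ∂ν := by
  obtain rfl : F = cdf μ := funext fun z => by rw [hF, cdf_eq_real, measureReal_def]
  obtain rfl : G = cdf ν := funext fun z => by rw [hG, cdf_eq_real, measureReal_def]
  have h_score_F :=
    integral_crps hν (monotone_cdf μ).measurable (integrable_sq_cdf_sub_cdf hμ hν)
  have h_score_G :=
    integral_crps hν (monotone_cdf ν).measurable (integrable_sq_cdf_sub_cdf hν hν)
  simp only [sub_self, zero_pow two_ne_zero, integral_zero, zero_add] at h_score_G
  change ∫ y, crps (cdf μ) y ∂ν - ∫ y, crps (cdf ν) y ∂ν = _ ∧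
    ∫ y, crps (cdf ν) y ∂ν ≤ ∫ y, crps (cdf μ) y ∂ν
  rw [h_score_F, h_score_G]
  exact ⟨add_sub_cancel_right _ _, le_add_of_nonneg_left (integral_nonneg fun z => sq_nonneg _)⟩
end
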